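/- arXiv:1511.02430 — 2 statements merged into one kernel-verified Lean document; each statement's English description precedes it below -/
import Mathlib

section
/- Let j ≥ 2 be an integer and let s ∈ ℝ satisfy −j + 1/2 ≤ s ≤ −j/2. There exists a constant C > 0 depending only on j and s such that for every real k with |k| ≥ 1 and every σ ∈ ℝ with (2(2j+1)/3)|k|^{2j} < |σ| ≤ 2(2j+1)|k|^{2j+1}, one has both ⟨k⟩^s⟨σ⟩^{1/(2j)} ≤ C·⟨k⟩^{(1−2j)s−1}⟨σ⟩^{s+1} and ⟨k⟩^{(1−2j)s−1}⟨σ⟩^{s+1} ≤ C·⟨k⟩^s⟨σ⟩^{(2j−1)/(2j)}. -/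
noncomputable section

/-- Japanese bracket `⟨x⟩ = (1+x²)^{1/2}`. -/
def jap (x : ℝ) : ℝ := Real.sqrt (1 + x ^ 2)

lemma jap_pos (x : ℝ) : 0 < jap x := Real.sqrt_pos.2 (by positivity)

lemma one_le_jap (x : ℝ) : 1 ≤ jap x := by
  calc (1:ℝ) = Real.sqrt 1 := Real.sqrt_one.symm
    _ ≤ jap x := Real.sqrt_le_sqrt (by nlinarith [sq_nonneg x])

lemma abs_le_jap (x : ℝ) : |x| ≤ jap x := by
  rw [jap, ← Real.sqrt_sq_eq_abs]
  exact Real.sqrt_le_sqrt (by nlinarith)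

lemma jap_le (x : ℝ) (h : 1 ≤ |x|) : jap x ≤ Real.sqrt 2 * |x| := by
  have hx2 : 1 ≤ x ^ 2 := by nlinarith [sq_abs x]
  rw [jap, ← Real.sqrt_sq_eq_abs, ← Real.sqrt_mul (by norm_num : (0:ℝ) ≤ 2)]
  exact Real.sqrt_le_sqrt (by nlinarith)

set_option maxHeartbeats 1000000 in
/-- **Pointwise weight comparison on the region `D₂`** (substance of Lemma 2.5 on `D₂`):
for `|k| ≥ 1` and `(2(2j+1)/3)|k|^{2j} < |σ| ≤ 2(2j+1)|k|^{2j+1}`, one has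
`⟨k⟩^s⟨σ⟩^{1/(2j)} ≤ C⟨k⟩^{(1−2j)s−1}⟨σ⟩^{s+1}` and
`⟨k⟩^{(1−2j)s−1}⟨σ⟩^{s+1} ≤ C⟨k⟩^s⟨σ⟩^{(2j−1)/(2j)}`. -/
theorem stmt_12 (j : ℕ) (hj : 2 ≤ j) (s : ℝ)
    (hs₁ : -(j : ℝ) + 1 / 2 ≤ s) (hs₂ : s ≤ -(j : ℝ) / 2) :
    ∃ C : ℝ, 0 < C ∧ ∀ k σ : ℝ, 1 ≤ |k| →
      2 * (2 * (j : ℝ) + 1) / 3 * |k| ^ (2 * j) < |σ| →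
      |σ| ≤ 2 * (2 * (j : ℝ) + 1) * |k| ^ (2 * j + 1) →
      jap k ^ s * jap σ ^ (1 / (2 * (j : ℝ))) ≤
          C * (jap k ^ ((1 - 2 * (j : ℝ)) * s - 1) * jap σ ^ (s + 1)) ∧
      jap k ^ ((1 - 2 * (j : ℝ)) * s - 1) * jap σ ^ (s + 1) ≤
          C * (jap k ^ s * jap σ ^ ((2 * (j : ℝ) - 1) / (2 * (j : ℝ)))) := by
  have hJ : (2:ℝ) ≤ (j:ℝ) := by exact_mod_cast hj
  set J : ℝ := (j:ℝ) with hJdef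
  have h2J : (0:ℝ) < 2 * J := by linarith
  have hinv : (1/(2*J)) * (2*J) = 1 := by field_simp
  have ht : 1/(2*J) ≤ 1/4 := by
    rw [div_le_div_iff₀ h2J (by norm_num)]
    linarith
  have htpos : 0 < 1/(2*J) := by positivity
  have hs1 : s ≤ -1 := by linarith
  -- exponents
  have hE : 0 ≤ 1/(2*J) - (s+1) := by linarith
  have hF : 0 ≤ -(1/(2*J)) - s := by linarith
  have hG : 0 ≤ -(2*J)*s - 1 := by nlinarith
  have hs2pos : (0:ℝ) < Real.sqrt 2 := Real.sqrt_pos.2 (by norm_num)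
  set A : ℝ := Real.sqrt 2 * (2*(2*J+1)) with hA
  have hApos : 0 < A := by rw [hA]; positivity
  set C₁ : ℝ := A ^ (1/(2*J) - (s+1)) with hC₁
  set C₂ : ℝ := Real.sqrt 2 ^ (-(2*J)*s - 1) with hC₂
  have hC₁pos : 0 < C₁ := Real.rpow_pos_of_pos hApos _
  have hC₂pos : 0 < C₂ := Real.rpow_pos_of_pos hs2pos _
  refine ⟨C₁ + C₂, by linarith, ?_⟩
  intro k σ hk hσ1 hσ2
  have hk0 : (0:ℝ) ≤ |k| := abs_nonneg k
  have hkj : (1:ℝ) ≤ |k| ^ (2*j) := one_le_pow₀ hk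
  have hσ_ge : 1 ≤ |σ| := by nlinarith
  have hjk : 1 ≤ jap k := one_le_jap k
  have hjσ : 1 ≤ jap σ := one_le_jap σ
  have hjkpos := jap_pos k
  have hjσpos := jap_pos σ
  -- upper bound for jap σ
  have hσU : jap σ ≤ A * jap k ^ (2*j+1) := by
    have h1 : jap σ ≤ Real.sqrt 2 * |σ| := jap_le σ hσ_ge
    have h2 : |k| ^ (2*j+1) ≤ jap k ^ (2*j+1) :=
      pow_le_pow_left₀ hk0 (abs_le_jap k) _
    have h3 : Real.sqrt 2 * |σ| ≤ Real.sqrt 2 * (2*(2*J+1) * |k| ^ (2*j+1)) := by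
      apply mul_le_mul_of_nonneg_left _ hs2pos.le
      linarith [hσ2]
    have h4 : A * |k| ^ (2*j+1) ≤ A * jap k ^ (2*j+1) :=
      mul_le_mul_of_nonneg_left h2 hApos.le
    have h5 : Real.sqrt 2 * (2*(2*J+1) * |k| ^ (2*j+1)) = A * |k| ^ (2*j+1) := by
      rw [hA]; ring
    linarith
  -- lower bound for jap σ
  have hσL : |k| ^ (2*j) ≤ jap σ := by
    have h1 := abs_le_jap σ
    nlinarith [pow_nonneg hk0 (2*j)]
  -- key estimate 1 : jap σ ^ E ≤ C₁ * jap k ^ G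
  have key1 : jap σ ^ (1/(2*J) - (s+1)) ≤ C₁ * jap k ^ (-(2*J)*s - 1) := by
    have h5 : jap σ ^ (1/(2*J) - (s+1)) ≤ (A * jap k ^ (2*j+1)) ^ (1/(2*J) - (s+1)) :=
      Real.rpow_le_rpow hjσpos.le hσU hE
    have h6 : (A * jap k ^ (2*j+1)) ^ (1/(2*J) - (s+1))
        = C₁ * (jap k ^ (2*j+1)) ^ (1/(2*J) - (s+1)) := by
      rw [Real.mul_rpow hApos.le (pow_nonneg hjkpos.le _), hC₁]
    have h7 : (jap k ^ (2*j+1)) ^ (1/(2*J) - (s+1))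
        = jap k ^ (((2*j+1 : ℕ) : ℝ) * (1/(2*J) - (s+1))) := by
      rw [← Real.rpow_natCast (jap k) (2*j+1), ← Real.rpow_mul hjkpos.le]
    have hexp : ((2*j+1 : ℕ) : ℝ) * (1/(2*J) - (s+1)) ≤ -(2*J)*s - 1 := by
      push_cast
      rw [← hJdef]
      nlinarith [hinv, hs₁, ht, hJ]
    have h8 : jap k ^ (((2*j+1 : ℕ) : ℝ) * (1/(2*J) - (s+1))) ≤ jap k ^ (-(2*J)*s - 1) :=
      Real.rpow_le_rpow_of_exponent_le hjk hexp
    calc jap σ ^ (1/(2*J) - (s+1))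
        ≤ C₁ * (jap k ^ (2*j+1)) ^ (1/(2*J) - (s+1)) := by rw [← h6]; exact h5
      _ = C₁ * jap k ^ (((2*j+1 : ℕ) : ℝ) * (1/(2*J) - (s+1))) := by rw [h7]
      _ ≤ C₁ * jap k ^ (-(2*J)*s - 1) := mul_le_mul_of_nonneg_left h8 hC₁pos.le
  -- key estimate 2 : jap k ^ G ≤ C₂ * jap σ ^ F
  have key2 : jap k ^ (-(2*J)*s - 1) ≤ C₂ * jap σ ^ (-(1/(2*J)) - s) := by
    have h5 : jap k ^ (-(2*J)*s - 1) ≤ (Real.sqrt 2 * |k|) ^ (-(2*J)*s - 1) :=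
      Real.rpow_le_rpow hjkpos.le (jap_le k hk) hG
    have h6 : (Real.sqrt 2 * |k|) ^ (-(2*J)*s - 1) = C₂ * |k| ^ (-(2*J)*s - 1) := by
      rw [Real.mul_rpow hs2pos.le hk0, hC₂]
    have h7 : (|k| ^ (2*j)) ^ (-(1/(2*J)) - s) ≤ jap σ ^ (-(1/(2*J)) - s) :=
      Real.rpow_le_rpow (pow_nonneg hk0 _) hσL hF
    have h8 : (|k| ^ (2*j)) ^ (-(1/(2*J)) - s) = |k| ^ (-(2*J)*s - 1) := by
      rw [← Real.rpow_natCast |k| (2*j), ← Real.rpow_mul hk0]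
      congr 1
      push_cast
      rw [← hJdef]
      field_simp
      ring
    have h9 : C₂ * |k| ^ (-(2*J)*s - 1) ≤ C₂ * jap σ ^ (-(1/(2*J)) - s) := by
      apply mul_le_mul_of_nonneg_left _ hC₂pos.le
      rw [← h8]; exact h7
    calc jap k ^ (-(2*J)*s - 1) ≤ C₂ * |k| ^ (-(2*J)*s - 1) := by rw [← h6]; exact h5
      _ ≤ C₂ * jap σ ^ (-(1/(2*J)) - s) := h9
  -- splitting identities
  have hsplitσ : jap σ ^ (1/(2*J)) = jap σ ^ (s+1) * jap σ ^ (1/(2*J) - (s+1)) := by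
    rw [← Real.rpow_add hjσpos]
    congr 1
    ring
  have hsplitk : jap k ^ s * jap k ^ (-(2*J)*s - 1) = jap k ^ ((1 - 2*J)*s - 1) := by
    rw [← Real.rpow_add hjkpos]
    congr 1
    ring
  have hsplitσ2 : jap σ ^ (s+1) * jap σ ^ (-(1/(2*J)) - s) = jap σ ^ ((2*J - 1)/(2*J)) := by
    rw [← Real.rpow_add hjσpos]
    congr 1
    field_simp
    ring
  constructor
  · -- first inequality
    have main : jap k ^ s * jap σ ^ (1/(2*J))
        ≤ C₁ * (jap k ^ ((1 - 2*J)*s - 1) * jap σ ^ (s+1)) := by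
      calc jap k ^ s * jap σ ^ (1/(2*J))
          = (jap k ^ s * jap σ ^ (s+1)) * jap σ ^ (1/(2*J) - (s+1)) := by
            rw [hsplitσ]; ring
        _ ≤ (jap k ^ s * jap σ ^ (s+1)) * (C₁ * jap k ^ (-(2*J)*s - 1)) := by
            apply mul_le_mul_of_nonneg_left key1
            positivity
        _ = C₁ * ((jap k ^ s * jap k ^ (-(2*J)*s - 1)) * jap σ ^ (s+1)) := by ring
        _ = C₁ * (jap k ^ ((1 - 2*J)*s - 1) * jap σ ^ (s+1)) := by rw [hsplitk]
    have hrhs : 0 ≤ jap k ^ ((1 - 2*J)*s - 1) * jap σ ^ (s+1) := by positivity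
    nlinarith [mul_le_mul_of_nonneg_right hC₂pos.le hrhs]
  · -- second inequality
    have main : jap k ^ ((1 - 2*J)*s - 1) * jap σ ^ (s+1)
        ≤ C₂ * (jap k ^ s * jap σ ^ ((2*J - 1)/(2*J))) := by
      calc jap k ^ ((1 - 2*J)*s - 1) * jap σ ^ (s+1)
          = (jap k ^ s * jap σ ^ (s+1)) * jap k ^ (-(2*J)*s - 1) := by
            rw [← hsplitk]; ring
        _ ≤ (jap k ^ s * jap σ ^ (s+1)) * (C₂ * jap σ ^ (-(1/(2*J)) - s)) := by
            apply mul_le_mul_of_nonneg_left key2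
            positivity
        _ = C₂ * (jap k ^ s * (jap σ ^ (s+1) * jap σ ^ (-(1/(2*J)) - s))) := by ring
        _ = C₂ * (jap k ^ s * jap σ ^ ((2*J - 1)/(2*J))) := by rw [hsplitσ2]
    have hrhs : 0 ≤ jap k ^ s * jap σ ^ ((2*J - 1)/(2*J)) := by positivity
    nlinarith [mul_le_mul_of_nonneg_right hC₁pos.le hrhs]

end
end

section
/- Fix an integer j ≥ 2, a real number s < −j + 1/2, and a time t > 0. Then there is no constant C > 0 such that ‖A₃(u₀)(t)‖_{Ḣ^s} ≤ C·‖u₀‖³_{Ḣ^s} holds for every zero-mean 2π-periodic trigonometric polynomial u₀. Consequently the solution map of the periodic higher-order KdV equation cannot be three times continuously differentiable at the origin from H^s(0,2π) to C([0,T]; H^s(0,2π)). -/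
/-!
Test on `φ_N = N^{-s}(e^{iNx} + e^{-iNx})`, whose `Ḣ^s` norm is `√2` for every `N`.
The interaction `N + N → 2N` is non-resonant, with phase mismatch
`r = P(2N) - 2P(N) = (2^{2j+1} - 2)P(N)`, so the mode `2N` of `A₂(φ_N)` has amplitude
`2N^{1-2s}/|r|` and oscillates partly like `e^{2iP(N)s}`. Paired with the mode `-N` of `u₁`,
this part is exactly resonant with the mode `N`, so the Duhamel integral for the mode `N` of
`A₃(φ_N)(t)` grows linearly in `t`: its modulus is at least `4N^{2-3s}/|r| · (t - 2/|r|)`.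
Hence `N^s |Â₃(φ_N)(t)(N)| ≳ t N^{1-2j-2s}`, which is unbounded as `N → ∞` exactly when
`s < -j + 1/2`.
-/

open MeasureTheory
open scoped ENNReal

noncomputable section

/-- Dispersion `P(k) = (−1)^{j+1} k^{2j+1}` of the higher-order KdV equation. -/
def disp (j : ℕ) (k : ℤ) : ℝ := (-1 : ℝ) ^ (j + 1) * (k : ℝ) ^ (2 * j + 1)

/-- Fourier coefficients of the free evolution `u₁(t) = S(t)u₀`, where `a` is the
(zero-mean) sequence of Fourier coefficients of `u₀`. -/
def c1 (j : ℕ) (a : ℤ → ℂ) (k : ℤ) (t : ℝ) : ℂ :=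
  Complex.exp (Complex.I * (disp j k : ℝ) * (t : ℝ)) * a k

/-- Fourier coefficients of the Duhamel term `∫₀ᵗ S(t−s)∂_x(u v) ds`, computed
coefficientwise: the `k`-th coefficient of `∂_x(uv)(s)` is `i k Σ_{k₁} c(k₁,s) d(k−k₁,s)`. -/
def duh (j : ℕ) (c d : ℤ → ℝ → ℂ) (k : ℤ) (t : ℝ) : ℂ :=
  ∫ s in (0 : ℝ)..t, Complex.exp (Complex.I * (disp j k : ℝ) * ((t - s : ℝ))) *
    (Complex.I * (k : ℂ) * ∑' k₁ : ℤ, c k₁ s * d (k - k₁) s)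

/-- Fourier coefficients of the second Picard iterate
`A₂(u₀)(t) = ∫₀ᵗ S(t−s)∂_x[(u₁(s))²] ds`. -/
def A2 (j : ℕ) (a : ℤ → ℂ) (k : ℤ) (t : ℝ) : ℂ := duh j (c1 j a) (c1 j a) k t

/-- Fourier coefficients of the third Picard iterate
`A₃(u₀)(t) = 2∫₀ᵗ S(t−s)∂_x[u₁(s)·A₂(u₀)(s)] ds`. -/
def A3 (j : ℕ) (a : ℤ → ℂ) (k : ℤ) (t : ℝ) : ℂ := 2 * duh j (c1 j a) (A2 j a) k t

/-- Homogeneous Sobolev norm `‖v‖_{Ḣ^s} = (Σ_{k≠0}|k|^{2s}|v̂(k)|²)^{1/2}`. -/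
def HdotS (s : ℝ) (v : ℤ → ℂ) : ℝ≥0∞ :=
  (∑' k : ℤ, if k = 0 then 0 else
    ENNReal.ofReal (|(k : ℝ)| ^ (2 * s)) * (‖v k‖₊ : ℝ≥0∞) ^ 2) ^ (1 / 2 : ℝ)

/-- Fourier coefficients of `φ_N(x) = N^{−s}(e^{iNx} + e^{−iNx})`. -/
def phi (s : ℝ) (N : ℕ) : ℤ → ℂ :=
  fun k => if k = (N : ℤ) ∨ k = -(N : ℤ) then (((N : ℝ) ^ (-s) : ℝ) : ℂ) else 0

open Complex Filter

lemma disp_neg (j : ℕ) (k : ℤ) : disp j (-k) = -disp j k := by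
  simp only [disp, Int.cast_neg, (Odd.neg_pow ⟨j, rfl⟩ (k : ℝ) : (-(k : ℝ)) ^ (2 * j + 1) = _)]
  ring

def resonance (j : ℕ) (k : ℤ) : ℝ := disp j (2 * k) - 2 * disp j k

lemma resonance_eq (j : ℕ) (k : ℤ) : resonance j k = (2 ^ (2 * j + 1) - 2) * disp j k := by
  simp only [resonance, disp]
  push_cast
  ring

lemma one_le_two_pow_sub_two {j : ℕ} (hj : 1 ≤ j) : (1 : ℝ) ≤ 2 ^ (2 * j + 1) - 2 := by
  have : (2 : ℝ) ^ 2 ≤ 2 ^ (2 * j + 1) := pow_le_pow_right₀ (by norm_num) (by omega)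
  linarith

lemma abs_resonance_natCast {j : ℕ} (hj : 1 ≤ j) (N : ℕ) :
    |resonance j N| = (2 ^ (2 * j + 1) - 2) * (N : ℝ) ^ (2 * j + 1) := by
  rw [resonance_eq, abs_mul, abs_of_pos (by linarith [one_le_two_pow_sub_two hj])]
  simp [disp, abs_mul, abs_pow]

lemma resonance_natCast_ne_zero {j N : ℕ} (hj : 1 ≤ j) (hN : N ≠ 0) : resonance j N ≠ 0 := by
  rw [← abs_pos, abs_resonance_natCast hj]
  have := one_le_two_pow_sub_two hj
  positivity

lemma integral_exp_mul_sub_mul_exp {W μ : ℝ} (h : μ ≠ W) (t : ℝ) :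
    ∫ s in (0 : ℝ)..t, cexp (I * W * ↑(t - s)) * cexp (I * μ * s)
      = (cexp (I * μ * t) - cexp (I * W * t)) / (I * ↑(μ - W)) := by
  have hc : I * ↑(μ - W) ≠ 0 := mul_ne_zero I_ne_zero (ofReal_ne_zero.mpr (sub_ne_zero.mpr h))
  have hexp : ∀ s : ℝ, cexp (I * W * ↑(t - s)) * cexp (I * μ * s)
      = cexp (I * W * t) * cexp (I * ↑(μ - W) * s) := fun s => by
    rw [← Complex.exp_add, ← Complex.exp_add]
    push_cast
    ring_nf
  simp only [hexp, intervalIntegral.integral_const_mul, integral_exp_mul_complex hc,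
    ofReal_zero, mul_zero, Complex.exp_zero]
  rw [mul_div_assoc', mul_sub, mul_one, ← Complex.exp_add]
  push_cast
  ring_nf

lemma integral_exp_mul_sub_mul_exp_self (W t : ℝ) :
    ∫ s in (0 : ℝ)..t, cexp (I * W * ↑(t - s)) * cexp (I * W * s) = t * cexp (I * W * t) := by
  have hexp : ∀ s : ℝ, cexp (I * W * ↑(t - s)) * cexp (I * W * s) = cexp (I * W * t) := fun s => by
    rw [← Complex.exp_add]
    push_cast
    ring_nf
  simp only [hexp, intervalIntegral.integral_const, sub_zero, real_smul]

lemma norm_exp_I_mul_sub_one_div_le (x t : ℝ) :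
    ‖(cexp (I * x * t) - 1) / (I * x)‖ ≤ 2 / |x| := by
  have hexp : ‖cexp (I * x * t)‖ = 1 := by
    rw [show I * x * t = ((x * t : ℝ) : ℂ) * I by push_cast; ring, norm_exp_ofReal_mul_I]
  rw [norm_div, norm_mul, norm_I, one_mul, norm_real, Real.norm_eq_abs]
  gcongr
  calc ‖cexp (I * x * t) - 1‖ ≤ ‖cexp (I * x * t)‖ + ‖(1 : ℂ)‖ := norm_sub_le _ _
    _ = 2 := by rw [hexp, norm_one]; norm_num

lemma ofReal_rpow_two_mul_mul_nnnorm_sq {x : ℝ} (hx : 0 ≤ x) (s : ℝ) (z : ℂ) :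
    ENNReal.ofReal (x ^ (2 * s)) * (‖z‖₊ : ℝ≥0∞) ^ 2 = ENNReal.ofReal (x ^ s * ‖z‖) ^ 2 := by
  rw [ENNReal.ofReal_mul (by positivity), mul_pow, ← ENNReal.ofReal_pow (by positivity),
    ← Real.rpow_mul_natCast hx, ofReal_norm, enorm_eq_nnnorm]
  norm_num [mul_comm]

lemma ofReal_abs_rpow_mul_norm_le_HdotS (s : ℝ) (v : ℤ → ℂ) {k : ℤ} (hk : k ≠ 0) :
    ENNReal.ofReal (|(k : ℝ)| ^ s * ‖v k‖) ≤ HdotS s v := by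
  have hterm := ENNReal.le_tsum (f := fun k : ℤ => if k = 0 then 0 else
    ENNReal.ofReal (|(k : ℝ)| ^ (2 * s)) * (‖v k‖₊ : ℝ≥0∞) ^ 2) k
  rw [if_neg hk, ofReal_rpow_two_mul_mul_nnnorm_sq (abs_nonneg _)] at hterm
  calc ENNReal.ofReal (|(k : ℝ)| ^ s * ‖v k‖)
      = (ENNReal.ofReal (|(k : ℝ)| ^ s * ‖v k‖) ^ 2) ^ (1 / 2 : ℝ) := by
        rw [← ENNReal.rpow_natCast, ← ENNReal.rpow_mul]
        norm_num
    _ ≤ HdotS s v := ENNReal.rpow_le_rpow hterm (by norm_num)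

section TestFunction

variable {j : ℕ} {s : ℝ} {N : ℕ}

lemma phi_of_ne {k : ℤ} (h₁ : k ≠ N) (h₂ : k ≠ -N) : phi s N k = 0 := by
  simp [phi, h₁, h₂]

lemma phi_zero (hN : N ≠ 0) : phi s N 0 = 0 :=
  phi_of_ne (by omega) (by omega)

lemma support_phi_finite : (Function.support (phi s N)).Finite :=
  (Set.toFinite {(N : ℤ), -(N : ℤ)}).subset fun k hk => by
    by_contra h
    simp only [Set.mem_insert_iff, Set.mem_singleton_iff, not_or] at h
    exact hk (phi_of_ne h.1 h.2)

lemma HdotS_phi (hN : N ≠ 0) : HdotS s (phi s N) = 2 ^ (1 / 2 : ℝ) := by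
  have hN' : (0 : ℝ) < N := by exact_mod_cast Nat.pos_of_ne_zero hN
  have hterm : ∀ k : ℤ, k = N ∨ k = -N → (if k = 0 then 0 else
      ENNReal.ofReal (|(k : ℝ)| ^ (2 * s)) * (‖phi s N k‖₊ : ℝ≥0∞) ^ 2) = 1 := by
    intro k hk
    have habs : |(k : ℝ)| = N := by
      rcases hk with rfl | rfl <;> simp
    rw [if_neg (by omega), ofReal_rpow_two_mul_mul_nnnorm_sq (abs_nonneg _), habs]
    rw [phi, if_pos hk, norm_real, Real.norm_eq_abs, abs_of_nonneg (by positivity),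
      ← Real.rpow_add hN', add_neg_cancel, Real.rpow_zero, ENNReal.ofReal_one, one_pow]
  have hvanish : ∀ k ∉ ({(N : ℤ), -(N : ℤ)} : Finset ℤ), (if k = 0 then 0 else
      ENNReal.ofReal (|(k : ℝ)| ^ (2 * s)) * (‖phi s N k‖₊ : ℝ≥0∞) ^ 2) = 0 := by
    intro k hk
    simp only [Finset.mem_insert, Finset.mem_singleton, not_or] at hk
    simp [phi_of_ne hk.1 hk.2]
  rw [HdotS, tsum_eq_sum hvanish, Finset.sum_pair (by omega), hterm _ (Or.inl rfl),
    hterm _ (Or.inr rfl), one_add_one_eq_two]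

lemma HdotS_phi_pow_three_le (hN : N ≠ 0) : HdotS s (phi s N) ^ 3 ≤ 8 := by
  rw [HdotS_phi hN, ← ENNReal.rpow_natCast, ← ENNReal.rpow_mul]
  calc (2 : ℝ≥0∞) ^ (1 / 2 * ((3 : ℕ) : ℝ)) ≤ 2 ^ (3 : ℝ) :=
        ENNReal.rpow_le_rpow_of_exponent_le (by norm_num) (by norm_num)
    _ = 8 := by norm_num

lemma c1_phi_of_ne {k : ℤ} (h₁ : k ≠ N) (h₂ : k ≠ -N) (σ : ℝ) : c1 j (phi s N) k σ = 0 := by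
  simp [c1, phi_of_ne h₁ h₂]

lemma c1_phi_natCast (σ : ℝ) :
    c1 j (phi s N) N σ = cexp (I * disp j N * σ) * ↑((N : ℝ) ^ (-s)) := by
  simp [c1, phi]

lemma c1_phi_neg_natCast (σ : ℝ) :
    c1 j (phi s N) (-N) σ = cexp (-(I * disp j N * σ)) * ↑((N : ℝ) ^ (-s)) := by
  simp [c1, phi, disp_neg]

lemma A2_zero (a : ℤ → ℂ) (t : ℝ) : A2 j a 0 t = 0 := by
  simp [A2, duh]

lemma A2_phi_two_mul (hj : 1 ≤ j) (hN : N ≠ 0) (σ : ℝ) :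
    A2 j (phi s N) (2 * N) σ = ((2 * N * ((N : ℝ) ^ (-s)) ^ 2 / resonance j N : ℝ) : ℂ) *
      (cexp (I * disp j (2 * N) * σ) - cexp (I * ↑(2 * disp j N) * σ)) := by
  have hsum : ∀ τ : ℝ, ∑' k₁ : ℤ, c1 j (phi s N) k₁ τ * c1 j (phi s N) (2 * N - k₁) τ
      = (((N : ℝ) ^ (-s) : ℝ) : ℂ) ^ 2 * cexp (I * ↑(2 * disp j N) * τ) := fun τ => by
    rw [tsum_eq_single (N : ℤ) fun k₁ hk₁ => ?_, two_mul, add_sub_cancel_right, c1_phi_natCast,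
      mul_mul_mul_comm, ← Complex.exp_add]
    · push_cast
      ring_nf
    by_cases hk : k₁ = -N
    · rw [c1_phi_of_ne (k := 2 * N - k₁) (by omega) (by omega), mul_zero]
    · rw [c1_phi_of_ne hk₁ hk, zero_mul]
  have hne : 2 * disp j N ≠ disp j (2 * N) := fun h =>
    resonance_natCast_ne_zero hj hN (by rw [resonance, h, sub_self])
  have hres : (resonance j N : ℂ) ≠ 0 := ofReal_ne_zero.mpr (resonance_natCast_ne_zero hj hN)
  have hres' : ((2 * disp j N - disp j (2 * N) : ℝ) : ℂ) ≠ 0 :=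
    ofReal_ne_zero.mpr (sub_ne_zero.mpr hne)
  have hint : ∀ τ : ℝ, cexp (I * disp j (2 * N) * ↑(σ - τ)) *
      (I * ((2 * N : ℤ) : ℂ) * ((((N : ℝ) ^ (-s) : ℝ) : ℂ) ^ 2 * cexp (I * ↑(2 * disp j N) * τ)))
      = I * 2 * N * (((N : ℝ) ^ (-s) : ℝ) : ℂ) ^ 2 *
        (cexp (I * disp j (2 * N) * ↑(σ - τ)) * cexp (I * ↑(2 * disp j N) * τ)) := fun τ => by
    push_cast
    ring
  simp only [A2, duh, hsum, hint, intervalIntegral.integral_const_mul,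
    integral_exp_mul_sub_mul_exp hne]
  simp only [resonance] at hres ⊢
  push_cast at hres hres' ⊢
  field_simp
  ring

lemma A3_phi_natCast (hj : 1 ≤ j) (hN : N ≠ 0) (t : ℝ) :
    A3 j (phi s N) N t = 2 * I * N * (((N : ℝ) ^ (-s) : ℝ) : ℂ) *
      ((2 * N * ((N : ℝ) ^ (-s)) ^ 2 / resonance j N : ℝ) : ℂ) * cexp (I * disp j N * t) *
      ((cexp (I * resonance j N * t) - 1) / (I * resonance j N) - t) := by
  set K : ℂ := (((N : ℝ) ^ (-s) : ℝ) : ℂ) * ((2 * N * ((N : ℝ) ^ (-s)) ^ 2 / resonance j N : ℝ) : ℂ)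
  have hsum : ∀ σ : ℝ, ∑' k₁ : ℤ, c1 j (phi s N) k₁ σ * A2 j (phi s N) (N - k₁) σ
      = K * (cexp (I * ↑(disp j (2 * N) - disp j N) * σ) - cexp (I * disp j N * σ)) := fun σ => by
    rw [tsum_eq_single (-N : ℤ) fun k₁ hk₁ => ?_, sub_neg_eq_add, ← two_mul, c1_phi_neg_natCast,
      A2_phi_two_mul hj hN]
    · have e₁ : cexp (-(I * disp j N * σ)) * cexp (I * disp j (2 * N) * σ)
          = cexp (I * ↑(disp j (2 * N) - disp j N) * σ) := by
        rw [← Complex.exp_add]; push_cast; ring_nf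
      have e₂ : cexp (-(I * disp j N * σ)) * cexp (I * ↑(2 * disp j N) * σ)
          = cexp (I * disp j N * σ) := by
        rw [← Complex.exp_add]; push_cast; ring_nf
      linear_combination K * e₁ - K * e₂
    by_cases hk : k₁ = N
    · rw [hk, sub_self, A2_zero, mul_zero]
    · rw [c1_phi_of_ne hk hk₁, zero_mul]
  have hint : ∀ σ : ℝ, cexp (I * disp j N * ↑(t - σ)) * (I * ((N : ℤ) : ℂ) *
      (K * (cexp (I * ↑(disp j (2 * N) - disp j N) * σ) - cexp (I * disp j N * σ))))
      = I * N * K * (cexp (I * disp j N * ↑(t - σ)) * cexp (I * ↑(disp j (2 * N) - disp j N) * σ)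
        - cexp (I * disp j N * ↑(t - σ)) * cexp (I * disp j N * σ)) := fun σ => by
    push_cast
    ring
  have hne : disp j (2 * N) - disp j N ≠ disp j N := fun h =>
    resonance_natCast_ne_zero hj hN (by rw [resonance]; linarith)
  have hres : (resonance j N : ℂ) ≠ 0 := ofReal_ne_zero.mpr (resonance_natCast_ne_zero hj hN)
  have hexp : cexp (I * ↑(disp j (2 * N) - disp j N) * t)
      = cexp (I * disp j N * t) * cexp (I * resonance j N * t) := by
    rw [← Complex.exp_add, resonance]
    push_cast
    ring_nf
  simp only [A3, duh, hsum, hint, intervalIntegral.integral_const_mul]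
  rw [intervalIntegral.integral_sub (Continuous.intervalIntegrable (by fun_prop) _ _)
    (Continuous.intervalIntegrable (by fun_prop) _ _), integral_exp_mul_sub_mul_exp hne,
    integral_exp_mul_sub_mul_exp_self, hexp]
  have hphase : ((disp j (2 * N) - disp j N - disp j N : ℝ) : ℂ) = resonance j N := by
    rw [resonance]; push_cast; ring
  rw [hphase]
  simp only [K]
  push_cast
  field_simp

lemma norm_A3_phi_natCast_ge (hj : 1 ≤ j) (hN : N ≠ 0) (t : ℝ) :
    4 * N ^ 2 * ((N : ℝ) ^ (-s)) ^ 3 / |resonance j N| * (t - 2 / |resonance j N|)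
      ≤ ‖A3 j (phi s N) N t‖ := by
  have hA : 0 ≤ (N : ℝ) ^ (-s) := by positivity
  have hexp : ‖cexp (I * disp j N * t)‖ = 1 := by
    rw [show I * disp j N * t = ((disp j N * t : ℝ) : ℂ) * I by push_cast; ring,
      norm_exp_ofReal_mul_I]
  have hq : t - 2 / |resonance j N|
      ≤ ‖(cexp (I * resonance j N * t) - 1) / (I * resonance j N) - t‖ := by
    rw [norm_sub_rev]
    calc t - 2 / |resonance j N|
        ≤ ‖(t : ℂ)‖ - ‖(cexp (I * resonance j N * t) - 1) / (I * resonance j N)‖ := by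
          rw [norm_real, Real.norm_eq_abs]
          linarith [le_abs_self t, norm_exp_I_mul_sub_one_div_le (resonance j N) t]
      _ ≤ _ := norm_sub_norm_le _ _
  rw [A3_phi_natCast hj hN]
  have hK : 0 ≤ 2 * N * ((N : ℝ) ^ (-s)) ^ 2 := by positivity
  simp only [norm_mul, norm_ofNat, norm_I, norm_natCast, norm_real, Real.norm_eq_abs, hexp,
    abs_of_nonneg hA, abs_div, abs_of_nonneg hK]
  calc 4 * N ^ 2 * ((N : ℝ) ^ (-s)) ^ 3 / |resonance j N| * (t - 2 / |resonance j N|)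
      = 2 * 1 * N * (N : ℝ) ^ (-s) * (2 * N * ((N : ℝ) ^ (-s)) ^ 2 / |resonance j N|) * 1 *
        (t - 2 / |resonance j N|) := by ring
    _ ≤ _ := by gcongr

lemma tendsto_rpow_mul_norm_A3_phi (hj : 1 ≤ j) (hs : s < -j + 1 / 2) {t : ℝ} (ht : 0 < t) :
    Tendsto (fun N : ℕ => (N : ℝ) ^ s * ‖A3 j (phi s N) N t‖) atTop atTop := by
  set c : ℝ := 2 ^ (2 * j + 1) - 2 with hc_def
  have hc : 0 < c := by linarith [one_le_two_pow_sub_two hj]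
  have hpow : ∀ x : ℝ, 0 < x →
      x ^ s * (x ^ 2 * (x ^ (-s)) ^ 3 / x ^ (2 * j + 1)) = x ^ (1 - 2 * (j : ℝ) - 2 * s) := by
    intro x hx
    rw [← Real.rpow_mul_natCast hx.le, ← Real.rpow_natCast x 2, ← Real.rpow_natCast x (2 * j + 1),
      mul_div_assoc', ← Real.rpow_add hx, ← Real.rpow_add hx, ← Real.rpow_sub hx]
    push_cast
    ring_nf
  have hlower : ∀ᶠ N : ℕ in atTop,
      (N : ℝ) ^ (1 - 2 * (j : ℝ) - 2 * s) * (4 / c * (t - 2 / (c * (N : ℝ) ^ (2 * j + 1))))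
        ≤ (N : ℝ) ^ s * ‖A3 j (phi s N) N t‖ := by
    filter_upwards [eventually_gt_atTop 0] with N hN
    calc (N : ℝ) ^ (1 - 2 * (j : ℝ) - 2 * s) * (4 / c * (t - 2 / (c * (N : ℝ) ^ (2 * j + 1))))
        = (N : ℝ) ^ s * (4 * N ^ 2 * ((N : ℝ) ^ (-s)) ^ 3 / |resonance j N| *
            (t - 2 / |resonance j N|)) := by
          rw [abs_resonance_natCast hj, ← hc_def, ← hpow N (by exact_mod_cast hN)]
          field_simp
      _ ≤ _ := by
          gcongr
          exact norm_A3_phi_natCast_ge hj hN.ne' t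
  refine tendsto_atTop_mono' _ hlower (Tendsto.atTop_mul_pos (C := 4 / c * t) (by positivity)
    ((tendsto_rpow_atTop (by linarith)).comp tendsto_natCast_atTop_atTop) ?_)
  have hden : Tendsto (fun N : ℕ => c * (N : ℝ) ^ (2 * j + 1)) atTop atTop :=
    ((tendsto_pow_atTop (by omega)).comp tendsto_natCast_atTop_atTop).const_mul_atTop hc
  simpa using ((tendsto_const_nhds.div_atTop hden).const_sub t).const_mul (4 / c)

end TestFunction

/-- **Theorem 1.2 (failure of the trilinear estimate):** for `s < −j + 1/2` and `t > 0`
there is no constant `C > 0` with `‖A₃(u₀)(t)‖_{Ḣ^s} ≤ C‖u₀‖³_{Ḣ^s}` for every zero-mean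
`2π`-periodic trigonometric polynomial `u₀`; hence the solution map of the periodic
higher-order KdV equation is not `C³` at the origin from `H^s(0,2π)` to `C([0,T];H^s(0,2π))`. -/
theorem stmt_18 (j : ℕ) (hj : 2 ≤ j) (s t : ℝ) (hs : s < -(j : ℝ) + 1 / 2) (ht : 0 < t) :
    ¬ ∃ C : ℝ, 0 < C ∧ ∀ a : ℤ → ℂ, a 0 = 0 → (Function.support a).Finite →
      HdotS s (fun k => A3 j a k t) ≤ ENNReal.ofReal C * HdotS s a ^ 3 := by
  rintro ⟨C, hC, hbound⟩
  have hle : ∀ N : ℕ, N ≠ 0 → (N : ℝ) ^ s * ‖A3 j (phi s N) N t‖ ≤ C * 8 := by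
    intro N hN
    have h := (ofReal_abs_rpow_mul_norm_le_HdotS s (fun k => A3 j (phi s N) k t)
      (Int.natCast_ne_zero.mpr hN)).trans (hbound _ (phi_zero hN) support_phi_finite)
    rw [Int.cast_natCast, Nat.abs_cast] at h
    refine (ENNReal.ofReal_le_ofReal_iff (by positivity)).mp (h.trans ?_)
    rw [ENNReal.ofReal_mul hC.le, ENNReal.ofReal_ofNat]
    gcongr
    exact HdotS_phi_pow_three_le hN
  obtain ⟨N, hN, hlarge⟩ := (((tendsto_rpow_mul_norm_A3_phi (by omega) hs ht).eventually_gt_atTop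
    (C * 8)).and (eventually_ne_atTop 0)).exists
  linarith [hle N hlarge]

end
end
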